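/- Let G be a finite group, N a normal subgroup of G, and π any set of prime numbers. Then k_π(G) ≤ k_π(G/N) · k_π(N). -/

import Mathlib

/-!
Count fibre by fibre over the natural map from π-classes of `G` to π-classes of `G/N`. The π-classes
of `G` over the class of `q ∈ G/N` are covered by the `N`-orbits, under conjugation, of the
π-elements of the coset `q`. By Burnside's lemma `|N|` times the number of these orbits is the
number of commuting pairs `(n, s)` with `n ∈ N` and `s` a π-element of `q`. When `q` is a
π-element, `(n, s) ↦ (ns, (ns)_π⁻¹ s)` followed by translation by a fixed element of `q` maps these
pairs injectively to the commuting pairs `(m, v)` with `m ∈ N` and `v` a π-element of `N`, whose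
number is `|N| k_π(N)`.
-/

def IsPiElement {G : Type*} [Monoid G] (π : Set ℕ) (g : G) : Prop :=
  ∀ p : ℕ, p.Prime → p ∣ orderOf g → p ∈ π

open MulAction ConjAct

theorem Nat.card_le_card_mul_of_forall_card_fiber_le {α β : Type*} [Finite α] [Finite β]
    (f : α → β) {n : ℕ} (h : ∀ b, Nat.card {a // f a = b} ≤ n) :
    Nat.card α ≤ Nat.card β * n := by
  have := Fintype.ofFinite β
  rw [← Nat.card_congr (Equiv.sigmaFiberEquiv f), Nat.card_sigma, Nat.card_eq_fintype_card,
    ← smul_eq_mul, ← Finset.card_univ]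
  exact Finset.sum_le_card_nsmul _ _ _ fun b _ => h b

theorem Nat.exists_pi_mul_pi'_eq (π : Set ℕ) {n : ℕ} (hn : n ≠ 0) :
    ∃ a b, a * b = n ∧ (∀ p, p.Prime → p ∣ a → p ∈ π) ∧ (∀ p, p.Prime → p ∣ b → p ∈ πᶜ) := by
  induction n using induction_on_primes with
  | zero => exact absurd rfl hn
  | one => exact ⟨1, 1, rfl, fun p hp h => absurd (Nat.dvd_one.1 h) hp.ne_one,
      fun p hp h => absurd (Nat.dvd_one.1 h) hp.ne_one⟩
  | prime_mul q n hq ih =>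
    obtain ⟨a, b, rfl, ha, hb⟩ := ih (right_ne_zero_of_mul hn)
    by_cases hqπ : q ∈ π
    · refine ⟨q * a, b, mul_assoc .., fun p hp h => ?_, hb⟩
      rcases hp.dvd_mul.1 h with h | h
      · rwa [(Nat.prime_dvd_prime_iff_eq hp hq).1 h]
      · exact ha p hp h
    · refine ⟨a, q * b, by ring, ha, fun p hp h => ?_⟩
      rcases hp.dvd_mul.1 h with h | h
      · rwa [(Nat.prime_dvd_prime_iff_eq hp hq).1 h]
      · exact hb p hp h

namespace IsPiElement

variable {M M' : Type*} [Monoid M] [Monoid M'] {π : Set ℕ}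

theorem of_orderOf_dvd {a : M} {b : M'} (hb : IsPiElement π b) (h : orderOf a ∣ orderOf b) :
    IsPiElement π a :=
  fun p hp hpa => hb p hp (hpa.trans h)

theorem map {a : M} (ha : IsPiElement π a) (f : M →* M') : IsPiElement π (f a) :=
  ha.of_orderOf_dvd (orderOf_map_dvd f a)

theorem mul {a b : M} (ha : IsPiElement π a) (hb : IsPiElement π b) (h : Commute a b) :
    IsPiElement π (a * b) := fun p hp hpab => by
  rcases hp.dvd_mul.1 (hpab.trans h.orderOf_mul_dvd_mul_orderOf) with hpa | hpb
  exacts [ha p hp hpa, hb p hp hpb]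

theorem eq_one_of_compl {a : M} (ha : IsPiElement π a) (ha' : IsPiElement πᶜ a) : a = 1 := by
  rw [← orderOf_eq_one_iff]
  by_contra h
  obtain ⟨p, hp, hpa⟩ := Nat.exists_prime_and_dvd h
  exact ha' p hp hpa (ha p hp hpa)

variable {G : Type*} [Group G] {a b : G}

theorem of_mem_zpowers (hb : IsPiElement π b) (h : a ∈ Subgroup.zpowers b) : IsPiElement π a :=
  hb.of_orderOf_dvd (orderOf_dvd_of_mem_zpowers h)

theorem of_isConj (ha : IsPiElement π a) (h : IsConj a b) : IsPiElement π b := by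
  obtain ⟨c, hc⟩ := h
  exact ha.of_orderOf_dvd (hc.orderOf_eq (c : G)).symm.dvd

theorem inv (ha : IsPiElement π a) : IsPiElement π a⁻¹ :=
  ha.of_orderOf_dvd (orderOf_inv a).dvd

end IsPiElement

section PiPart

variable {G : Type*} [Group G] (π : Set ℕ)

theorem IsOfFinOrder.exists_isPiElement_mem_zpowers {g : G} (hg : IsOfFinOrder g) :
    ∃ a ∈ Subgroup.zpowers g, IsPiElement π a ∧ IsPiElement πᶜ (a⁻¹ * g) := by
  obtain ⟨m₁, m₂, hm, hm₁, hm₂⟩ :=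
    Nat.exists_pi_mul_pi'_eq π (orderOf_pos_iff.2 hg).ne'
  have hcop : Nat.Coprime m₁ m₂ := Nat.coprime_of_dvd fun p hp h₁ h₂ => hm₂ p hp h₂ (hm₁ p hp h₁)
  obtain ⟨u, v, huv⟩ := Nat.isCoprime_iff_coprime.2 hcop
  have hkill : ∀ k : ℤ, g ^ (k * (m₁ * m₂ : ℕ)) = 1 := fun k => by
    rw [hm, mul_comm, zpow_mul, zpow_natCast, pow_orderOf_eq_one, one_zpow]
  have hπ : (g ^ (v * m₂)) ^ m₁ = 1 := by
    rw [← zpow_natCast, ← zpow_mul, ← hkill v]; push_cast; ring_nf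
  have hπ' : ((g ^ (v * m₂))⁻¹ * g) ^ m₂ = 1 := by
    have : (g ^ (v * m₂))⁻¹ * g = g ^ (u * m₁) := by
      rw [← zpow_neg, ← zpow_add_one, ← huv]; ring_nf
    rw [this, ← zpow_natCast, ← zpow_mul, ← hkill u]; push_cast; ring_nf
  exact ⟨g ^ (v * m₂), ⟨v * m₂, rfl⟩,
    fun p hp h => hm₁ p hp (h.trans (orderOf_dvd_of_pow_eq_one hπ)),
    fun p hp h => hm₂ p hp (h.trans (orderOf_dvd_of_pow_eq_one hπ'))⟩

variable [Finite G]

noncomputable def piPart (g : G) : G :=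
  ((isOfFinOrder_of_finite g).exists_isPiElement_mem_zpowers π).choose

theorem piPart_mem_zpowers (g : G) : piPart π g ∈ Subgroup.zpowers g :=
  ((isOfFinOrder_of_finite g).exists_isPiElement_mem_zpowers π).choose_spec.1

theorem isPiElement_piPart (g : G) : IsPiElement π (piPart π g) :=
  ((isOfFinOrder_of_finite g).exists_isPiElement_mem_zpowers π).choose_spec.2.1

theorem isPiElement_compl_piPart_inv_mul (g : G) : IsPiElement πᶜ ((piPart π g)⁻¹ * g) :=
  ((isOfFinOrder_of_finite g).exists_isPiElement_mem_zpowers π).choose_spec.2.2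

theorem Commute.piPart_left {g c : G} (h : Commute g c) : Commute (piPart π g) c := by
  obtain ⟨k, hk⟩ := piPart_mem_zpowers π g
  exact hk ▸ h.zpow_left k

theorem map_piPart_inv_mul_eq_one {H : Type*} [Group H] (f : G →* H) {g : G}
    (hg : IsPiElement π (f g)) : f ((piPart π g)⁻¹ * g) = 1 := by
  obtain ⟨k, hk⟩ := piPart_mem_zpowers π g
  refine IsPiElement.eq_one_of_compl (hg.of_mem_zpowers ⟨-k + 1, ?_⟩)
    ((isPiElement_compl_piPart_inv_mul π g).map f)
  simp only [← hk, map_mul, map_inv, map_zpow, zpow_add_one, zpow_neg]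

end PiPart

section Conjugation

variable {G : Type*} [Group G]

/-- `N` inside `ConjAct G`, so that it acts on `G` by conjugation. -/
def Subgroup.toConjAct (N : Subgroup G) : Subgroup (ConjAct G) := N.comap ofConjAct.toMonoidHom

def Subgroup.commutingPairs (N : Subgroup G) (S : Set G) : Set (G × G) :=
  {p | p.1 ∈ N ∧ p.2 ∈ S ∧ Commute p.1 p.2}

namespace Subgroup

variable (N : Subgroup G)

theorem orbitRel_toConjAct_iff {p : SubMulAction N.toConjAct G} {a b : p} :
    orbitRel N.toConjAct p a b ↔ ∃ n ∈ N, n * (b : G) * n⁻¹ = a := by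
  rw [orbitRel_apply, mem_orbit_iff]
  constructor
  · rintro ⟨h, rfl⟩
    exact ⟨ofConjAct h, h.2, rfl⟩
  · rintro ⟨n, hn, hab⟩
    exact ⟨⟨ConjAct.toConjAct n, hn⟩, Subtype.ext hab⟩

def sigmaFixedByEquivCommutingPairs (p : SubMulAction N.toConjAct G) :
    (Σ h : N.toConjAct, fixedBy p h) ≃ N.commutingPairs p where
  toFun z := ⟨(ofConjAct z.1, z.2.1), z.1.2, z.2.1.2,
    mul_inv_eq_iff_eq_mul.1 (congrArg Subtype.val z.2.2)⟩
  invFun q := ⟨⟨ConjAct.toConjAct q.1.1, q.2.1⟩, ⟨q.1.2, q.2.2.1⟩,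
    Subtype.ext (mul_inv_eq_of_eq_mul q.2.2.2)⟩
  left_inv _ := rfl
  right_inv _ := rfl

theorem card_orbitRel_quotient_mul_card [Finite G] (p : SubMulAction N.toConjAct G) :
    Nat.card (orbitRel.Quotient N.toConjAct p) * Nat.card N = (N.commutingPairs p).ncard := by
  have hN : Nat.card N.toConjAct = Nat.card N := Nat.card_congr
    ⟨fun h => ⟨ofConjAct h, h.2⟩, fun n => ⟨ConjAct.toConjAct n, n.2⟩, fun _ => rfl, fun _ => rfl⟩
  rw [← hN, ← Nat.card_prod, ← Nat.card_congr (sigmaFixedByEquivOrbitsProdGroup _ _),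
    Nat.card_congr (N.sigmaFixedByEquivCommutingPairs p), Nat.card_coe_set_eq]

/-- The elements of the coset `q` commuting with `v` are either none or a translate `c · C_N(v)`,
so multiplying them by a fixed such `c⁻¹` maps them injectively into `N`. -/
theorem ncard_commutingPairs_coset_le [N.Normal] [Finite G] (q : G ⧸ N) (V : Set G) :
    {p : G × G | (p.1 : G ⧸ N) = q ∧ p.2 ∈ V ∧ Commute p.1 p.2}.ncard ≤
      (N.commutingPairs V).ncard := by
  let c (v : G) : G := Classical.epsilon fun y : G => (y : G ⧸ N) = q ∧ Commute y v
  refine Set.ncard_le_ncard_of_injOn (fun p => ((c p.2)⁻¹ * p.1, p.2)) ?_ ?_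
  · rintro ⟨g, v⟩ ⟨hg, hv, hgv⟩
    obtain ⟨hc, hcv⟩ : ((c v : G) : G ⧸ N) = q ∧ Commute (c v) v :=
      Classical.epsilon_spec (p := fun y : G => (y : G ⧸ N) = q ∧ Commute y v) ⟨g, hg, hgv⟩
    refine ⟨?_, hv, hcv.inv_left.mul_left hgv⟩
    rw [← QuotientGroup.eq_one_iff, QuotientGroup.mk_mul, QuotientGroup.mk_inv, hc, hg,
      inv_mul_cancel]
  · rintro ⟨g₁, v₁⟩ - ⟨g₂, v₂⟩ - h
    obtain ⟨hg, rfl : v₁ = v₂⟩ := Prod.ext_iff.1 h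
    simpa using hg

end Subgroup

abbrev PiConjClasses (π : Set ℕ) (G : Type*) [Group G] :=
  {c : ConjClasses G // ∀ g ∈ c.carrier, IsPiElement π g}

variable (π : Set ℕ)

theorem forall_mem_carrier_mk_isPiElement_iff {g : G} :
    (∀ y ∈ (ConjClasses.mk g).carrier, IsPiElement π y) ↔ IsPiElement π g :=
  ⟨fun h => h g ConjClasses.mem_carrier_mk, fun hg _ hy =>
    hg.of_isConj (ConjClasses.mk_eq_mk_iff_isConj.1 (ConjClasses.mem_carrier_iff_mk_eq.1 hy)).symm⟩

def PiConjClasses.mk {π : Set ℕ} (g : G) (hg : IsPiElement π g) : PiConjClasses π G :=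
  ⟨ConjClasses.mk g, (forall_mem_carrier_mk_isPiElement_iff π).2 hg⟩

def PiConjClasses.map {π : Set ℕ} {H : Type*} [Group H] (f : G →* H) (c : PiConjClasses π G) :
    PiConjClasses π H :=
  ⟨ConjClasses.map f c.1, by
    obtain ⟨c, hc⟩ := c
    obtain ⟨g, rfl⟩ := c.exists_rep
    exact (forall_mem_carrier_mk_isPiElement_iff π).2
      (((forall_mem_carrier_mk_isPiElement_iff π).1 hc).map f)⟩

section Coset

variable (N : Subgroup G) [N.Normal]

def piCoset (q : G ⧸ N) : SubMulAction N.toConjAct G where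
  carrier := {s | IsPiElement π s ∧ (s : G ⧸ N) = q}
  smul_mem' h s hs := by
    refine ⟨hs.1.of_isConj (isConj_iff.2 ⟨ofConjAct h, rfl⟩), ?_⟩
    have hh : ((ofConjAct (h : ConjAct G) : G) : G ⧸ N) = 1 := (QuotientGroup.eq_one_iff _).2 h.2
    rw [← hs.2, Subgroup.smul_def, ConjAct.smul_def, QuotientGroup.mk_mul, QuotientGroup.mk_mul,
      QuotientGroup.mk_inv, hh, one_mul, inv_one, mul_one]

variable [Finite G]

/-- The map `(n, s) ↦ (ns, (ns)_π⁻¹ s)` is injective, as `s = (ns)_π ((ns)_π⁻¹ s)`. Its second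
component is a π-element of `N`: it equals the π'-part of `ns` times `n⁻¹`, and the π'-part of `ns`
lies in `N` because `ns ∈ q` maps to a π-element. -/
theorem ncard_commutingPairs_piCoset_le {q : G ⧸ N} (hq : IsPiElement π q) :
    (N.commutingPairs (piCoset π N q)).ncard ≤
      {p : G × G | (p.1 : G ⧸ N) = q ∧ p.2 ∈ piCoset π N 1 ∧ Commute p.1 p.2}.ncard := by
  refine Set.ncard_le_ncard_of_injOn (fun p => (p.1 * p.2, (piPart π (p.1 * p.2))⁻¹ * p.2)) ?_ ?_
  · rintro ⟨n, s⟩ ⟨hn, ⟨hs, hsq⟩, hns⟩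
    dsimp only at hn hs hsq hns ⊢
    have hq' : ((n * s : G) : G ⧸ N) = q := by
      rw [QuotientGroup.mk_mul, (QuotientGroup.eq_one_iff n).2 hn, one_mul, hsq]
    have hsg : Commute s (n * s) := hns.symm.mul_right (Commute.refl s)
    have hv : (piPart π (n * s))⁻¹ * s = ((piPart π (n * s))⁻¹ * (n * s)) * n⁻¹ := by
      rw [mul_assoc, mul_inv_eq_of_eq_mul hns.eq]
    refine ⟨hq', ⟨(isPiElement_piPart π _).inv.mul hs (hsg.symm.piPart_left π).inv_left, ?_⟩,
      ((Commute.refl _).piPart_left π).symm.inv_right.mul_right hsg.symm⟩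
    rw [hv, QuotientGroup.mk_mul, QuotientGroup.mk_inv, (QuotientGroup.eq_one_iff n).2 hn,
      inv_one, mul_one]
    exact map_piPart_inv_mul_eq_one π (QuotientGroup.mk' N) (by rwa [QuotientGroup.mk'_apply, hq'])
  · rintro ⟨n₁, s₁⟩ - ⟨n₂, s₂⟩ - h
    obtain ⟨hg, hv⟩ := Prod.ext_iff.1 h
    dsimp only at hg hv
    rw [hg, mul_right_inj] at hv
    rw [hv, mul_left_inj] at hg
    rw [hg, hv]

end Coset

section Orbits

variable (N : Subgroup G) [N.Normal] [Finite G]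

theorem card_orbitRel_quotient_piCoset_le {q : G ⧸ N} (hq : IsPiElement π q) :
    Nat.card (orbitRel.Quotient N.toConjAct (piCoset π N q)) ≤
      Nat.card (orbitRel.Quotient N.toConjAct (piCoset π N 1)) := by
  refine Nat.le_of_mul_le_mul_right ?_ (Nat.card_pos (α := N))
  rw [N.card_orbitRel_quotient_mul_card, N.card_orbitRel_quotient_mul_card]
  exact (ncard_commutingPairs_piCoset_le π N hq).trans (N.ncard_commutingPairs_coset_le q _)

theorem card_orbitRel_quotient_piCoset_one_le :
    Nat.card (orbitRel.Quotient N.toConjAct (piCoset π N 1)) ≤ Nat.card (PiConjClasses π N) := by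
  have hmem (v : piCoset π N 1) : (v : G) ∈ N := (QuotientGroup.eq_one_iff _).1 v.2.2
  let f (v : piCoset π N 1) : PiConjClasses π N :=
    PiConjClasses.mk ⟨v, hmem v⟩ (v.2.1.of_orderOf_dvd (Subgroup.orderOf_mk _ _).dvd)
  refine Nat.card_le_card_of_injective (Quotient.lift f ?_) ?_
  · intro a b hab
    obtain ⟨n, hn, hab⟩ := (N.orbitRel_toConjAct_iff).1 hab
    exact Subtype.ext
      (ConjClasses.mk_eq_mk_iff_isConj.2 (isConj_iff.2 ⟨⟨n, hn⟩, Subtype.ext hab⟩)).symm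
  · rintro ⟨a⟩ ⟨b⟩ hab
    obtain ⟨n, hn⟩ := isConj_iff.1 (ConjClasses.mk_eq_mk_iff_isConj.1 (congrArg Subtype.val hab))
    have hn : (n : G) * a * (n : G)⁻¹ = b := congrArg Subtype.val hn
    exact Quotient.sound
      ((N.orbitRel_toConjAct_iff).2 ⟨(n : G)⁻¹, inv_mem n.2, by rw [← hn]; group⟩)

theorem card_fiber_map_le_card_orbitRel_quotient (b : PiConjClasses π (G ⧸ N)) {q : G ⧸ N}
    (hb : b.1 = ConjClasses.mk q) :
    Nat.card {c : PiConjClasses π G // c.map (QuotientGroup.mk' N) = b} ≤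
      Nat.card (orbitRel.Quotient N.toConjAct (piCoset π N q)) := by
  let f (s : piCoset π N q) : {c : PiConjClasses π G // c.map (QuotientGroup.mk' N) = b} :=
    ⟨PiConjClasses.mk s s.2.1, Subtype.ext (by
      show ConjClasses.mk ((s : G) : G ⧸ N) = b.1
      rw [hb, s.2.2])⟩
  refine Nat.card_le_card_of_surjective (Quotient.lift f ?_) ?_
  · intro a b hab
    obtain ⟨n, hn, hab⟩ := (N.orbitRel_toConjAct_iff).1 hab
    exact Subtype.ext (Subtype.ext
      (ConjClasses.mk_eq_mk_iff_isConj.2 (isConj_iff.2 ⟨n, hab⟩)).symm)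
  · rintro ⟨⟨c, hc⟩, hcb⟩
    obtain ⟨g, rfl⟩ := c.exists_rep
    obtain ⟨u, hu⟩ := isConj_iff.1 (ConjClasses.mk_eq_mk_iff_isConj.1
      ((congrArg Subtype.val hcb).trans hb : ConjClasses.mk (g : G ⧸ N) = ConjClasses.mk q))
    obtain ⟨h, rfl⟩ := QuotientGroup.mk_surjective u
    refine ⟨Quotient.mk _ ⟨h * g * h⁻¹, ?_, ?_⟩, ?_⟩
    · exact ((forall_mem_carrier_mk_isPiElement_iff π).1 hc).of_isConj (isConj_iff.2 ⟨h, rfl⟩)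
    · rw [← hu]; rfl
    · exact Subtype.ext (Subtype.ext
        (ConjClasses.mk_eq_mk_iff_isConj.2 (isConj_iff.2 ⟨h⁻¹, by group⟩)))

theorem card_fiber_map_le (b : PiConjClasses π (G ⧸ N)) :
    Nat.card {c : PiConjClasses π G // c.map (QuotientGroup.mk' N) = b} ≤
      Nat.card (PiConjClasses π N) := by
  obtain ⟨q, hq⟩ := b.1.exists_rep
  have hqπ : IsPiElement π q := (forall_mem_carrier_mk_isPiElement_iff π).1 (hq ▸ b.2)
  exact (card_fiber_map_le_card_orbitRel_quotient π N b hq.symm).trans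
    ((card_orbitRel_quotient_piCoset_le π N hqπ).trans (card_orbitRel_quotient_piCoset_one_le π N))

end Orbits

end Conjugation

/-- Lemma 2.3: `k_π(G) ≤ k_π(G/N) ⬝ k_π(N)`. -/
theorem stmt_1 {G : Type*} [Group G] [Finite G] (N : Subgroup G) [N.Normal]
    (π : Set ℕ) :
    Nat.card {c : ConjClasses G // ∀ g ∈ c.carrier, IsPiElement π g} ≤
      Nat.card {c : ConjClasses (G ⧸ N) // ∀ g ∈ c.carrier, IsPiElement π g} *
      Nat.card {c : ConjClasses N // ∀ g ∈ c.carrier, IsPiElement π g} :=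
  Nat.card_le_card_mul_of_forall_card_fiber_le (PiConjClasses.map (QuotientGroup.mk' N))
    (card_fiber_map_le π N)
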